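/- The family H_1 satisfies the codegeneracy identities of a (corepresented) simplicial homotopy: for all applicable n, i, j one has (i) if i ≤ j then H_1^{j,n} ∘ (σ^i×σ^i) = (σ^i×σ^i) ∘ H_1^{j+1,n+1}; (ii) if i > j then H_1^{j,n} ∘ (σ^i×σ^i) = (σ^{i−1}×σ^{i−1}) ∘ H_1^{j,n+1}, as maps [n+2]×[n+2] → [n]×[n]. -/
import Mathlib


/-- The map `H_1^{i,n} : [n+1]×[n+1] → [n]×[n]` given by `(j,k) ↦ (j,k)` if `j,k ≤ i`;
`(j−1,j−1)` if `j > i` and `j ≥ k`; `(j,k−1)` if `k > i ≥ j`; and `(j−1,k−1)` if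
`k > j > i`. -/
def H1 (n : ℕ) (i : Fin (n + 1)) (p : Fin (n + 2) × Fin (n + 2)) :
    Fin (n + 1) × Fin (n + 1) :=
  if h1 : (p.1 : ℕ) ≤ (i : ℕ) then
    (⟨(p.1 : ℕ), lt_of_le_of_lt h1 i.isLt⟩,
      if h2 : (p.2 : ℕ) ≤ (i : ℕ) then ⟨(p.2 : ℕ), lt_of_le_of_lt h2 i.isLt⟩
      else ⟨(p.2 : ℕ) - 1, by have := p.2.isLt; omega⟩)
  else
    if h2 : (p.2 : ℕ) ≤ (p.1 : ℕ) then
      (⟨(p.1 : ℕ) - 1, by have := p.1.isLt; omega⟩,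
        ⟨(p.1 : ℕ) - 1, by have := p.1.isLt; omega⟩)
    else
      (⟨(p.1 : ℕ) - 1, by have := p.1.isLt; omega⟩,
        ⟨(p.2 : ℕ) - 1, by have := p.2.isLt; omega⟩)

lemma coe_predAbove {n : ℕ} (p : Fin n) (i : Fin (n + 1)) :
    (p.predAbove i : ℕ) = if (p : ℕ) < (i : ℕ) then (i : ℕ) - 1 else (i : ℕ) := by
  unfold Fin.predAbove
  split_ifs with h h' h'
  · simp [Fin.lt_def] at h; rfl
  · simp [Fin.lt_def] at h h'; omega
  · simp [Fin.lt_def] at h h'; omega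
  · rfl

lemma H1_fst (n : ℕ) (i : Fin (n + 1)) (p : Fin (n + 2) × Fin (n + 2)) :
    ((H1 n i p).1 : ℕ) = if (p.1 : ℕ) ≤ (i : ℕ) then (p.1 : ℕ) else (p.1 : ℕ) - 1 := by
  unfold H1; split_ifs with h h' <;> rfl

lemma H1_snd (n : ℕ) (i : Fin (n + 1)) (p : Fin (n + 2) × Fin (n + 2)) :
    ((H1 n i p).2 : ℕ) =
      if (p.1 : ℕ) ≤ (i : ℕ) then
        (if (p.2 : ℕ) ≤ (i : ℕ) then (p.2 : ℕ) else (p.2 : ℕ) - 1)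
      else if (p.2 : ℕ) ≤ (p.1 : ℕ) then (p.1 : ℕ) - 1 else (p.2 : ℕ) - 1 := by
  unfold H1; split_ifs <;> rfl

set_option maxHeartbeats 2000000 in
/-- **Codegeneracy identities of the (corepresented) simplicial homotopy `H_1`.**
Here `σ^j = Fin.predAbove j`.  For all applicable `n`, `i`, `j`:
(i) if `i ≤ j` then `H_1^{j,n} ∘ (σ^i×σ^i) = (σ^i×σ^i) ∘ H_1^{j+1,n+1}`;
(ii) if `i > j` then `H_1^{j,n} ∘ (σ^i×σ^i) = (σ^{i−1}×σ^{i−1}) ∘ H_1^{j,n+1}`,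
as maps `[n+2]×[n+2] → [n]×[n]`. -/
theorem H1_codegeneracy_identities :
    (∀ (n i j : ℕ) (hij : i ≤ j) (hj : j ≤ n),
      H1 n ⟨j, by omega⟩ ∘
          Prod.map (Fin.predAbove (⟨i, by omega⟩ : Fin (n + 2)))
            (Fin.predAbove (⟨i, by omega⟩ : Fin (n + 2)))
        = Prod.map (Fin.predAbove (⟨i, by omega⟩ : Fin (n + 1)))
              (Fin.predAbove (⟨i, by omega⟩ : Fin (n + 1))) ∘
            H1 (n + 1) ⟨j + 1, by omega⟩) ∧
    ∀ (n i j : ℕ) (hij : j < i) (hi : i ≤ n + 1) (hj : j ≤ n),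
      H1 n ⟨j, by omega⟩ ∘
          Prod.map (Fin.predAbove (⟨i, by omega⟩ : Fin (n + 2)))
            (Fin.predAbove (⟨i, by omega⟩ : Fin (n + 2)))
        = Prod.map (Fin.predAbove (⟨i - 1, by omega⟩ : Fin (n + 1)))
              (Fin.predAbove (⟨i - 1, by omega⟩ : Fin (n + 1))) ∘
            H1 (n + 1) ⟨j, by omega⟩ := by
  refine ⟨fun n i j hij hj => ?_, fun n i j hij hi hj => ?_⟩ <;> funext ⟨⟨a, ha⟩, ⟨b, hb⟩⟩ <;>
    refine Prod.ext (Fin.ext ?_) (Fin.ext ?_) <;>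
  · simp only [Function.comp_apply, Prod.map_fst, Prod.map_snd, H1_fst, H1_snd,
      coe_predAbove, Fin.val_mk]
    
    split_ifs <;> omega
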